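/- arXiv:0710.4180 — 4 statements merged into one kernel-verified Lean document; each statement's English description precedes it below -/
import Mathlib

section
/- Let P be an n×m matrix with orthonormal columns, c ∈ R^n, p(v) = Pᵗ(v − c), q(z) = Pz + c, and δ(v) = ‖v − q(p(v))‖. For x, y ∈ R^n define compressed features Y(x) = (p(x), δ(x)) ∈ R^{m+1} and Y(y) = (p(y), δ(y)). Then ‖p(x) − p(y)‖ ≤ ‖Y(x) − Y(y)‖ ≤ ‖x − y‖. In particular, the distance between compressed features is a lower bound on the original distance that is at least as tight as the distance between projected features. -/
noncomputable section
open Matrix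
open scoped InnerProductSpace

/-- Projection map p(v) = Pᵀ(v − c). -/
noncomputable def proj {n m : ℕ} (P : Matrix (Fin n) (Fin m) ℝ)
    (c v : EuclideanSpace ℝ (Fin n)) : EuclideanSpace ℝ (Fin m) :=
  Matrix.toEuclideanLin Pᵀ (v - c)

/-- Generalized inverse q(z) = Pz + c. -/
noncomputable def qinv {n m : ℕ} (P : Matrix (Fin n) (Fin m) ℝ)
    (c : EuclideanSpace ℝ (Fin n)) (z : EuclideanSpace ℝ (Fin m)) :
    EuclideanSpace ℝ (Fin n) :=
  Matrix.toEuclideanLin P z + c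

/-- Projection distance δ(v) = ‖v − q(p(v))‖. -/
noncomputable def pdist {n m : ℕ} (P : Matrix (Fin n) (Fin m) ℝ)
    (c v : EuclideanSpace ℝ (Fin n)) : ℝ :=
  ‖v - qinv P c (proj P c v)‖


/-- Compressed feature Y(v) = (p(v), δ(v)) with the ℓ² product norm,
so ‖Y(x) − Y(y)‖² = ‖p(x) − p(y)‖² + (δ(x) − δ(y))². -/
noncomputable def compFeat {n m : ℕ} (P : Matrix (Fin n) (Fin m) ℝ)
    (c v : EuclideanSpace ℝ (Fin n)) : WithLp 2 (EuclideanSpace ℝ (Fin m) × ℝ) :=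
  (WithLp.equiv 2 _).symm (proj P c v, pdist P c v)

lemma fg_eq {n m : ℕ} {P : Matrix (Fin n) (Fin m) ℝ} (hP : Pᵀ * P = 1)
    (z : EuclideanSpace ℝ (Fin m)) :
    Matrix.toEuclideanLin Pᵀ (Matrix.toEuclideanLin P z) = z := by
  simp [Matrix.toEuclideanLin_apply, Matrix.mulVec_mulVec, hP]

lemma inner_g {n m : ℕ} (P : Matrix (Fin n) (Fin m) ℝ)
    (z : EuclideanSpace ℝ (Fin m)) (w : EuclideanSpace ℝ (Fin n)) :
    ⟪Matrix.toEuclideanLin P z, w⟫_ℝ = ⟪z, Matrix.toEuclideanLin Pᵀ w⟫_ℝ := by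
  have h : Matrix.toEuclideanLin Pᵀ = LinearMap.adjoint (Matrix.toEuclideanLin P) := by
    rw [← Matrix.toEuclideanLin_conjTranspose_eq_adjoint, Matrix.conjTranspose]
    rfl
  rw [h, LinearMap.adjoint_inner_right]

/-- Distance bounding: ‖p(x) − p(y)‖ ≤ ‖Y(x) − Y(y)‖ ≤ ‖x − y‖. -/
theorem compressed_feature_distance_bounds {n m : ℕ} (P : Matrix (Fin n) (Fin m) ℝ)
    (hP : Pᵀ * P = 1) (c x y : EuclideanSpace ℝ (Fin n)) :
    ‖proj P c x - proj P c y‖ ≤ ‖compFeat P c x - compFeat P c y‖ ∧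
      ‖compFeat P c x - compFeat P c y‖ ≤ ‖x - y‖ := by
  set g := Matrix.toEuclideanLin P with hg
  set f := Matrix.toEuclideanLin Pᵀ with hf
  set d : EuclideanSpace ℝ (Fin m) := proj P c x - proj P c y with hd
  set r : EuclideanSpace ℝ (Fin n) :=
    (x - qinv P c (proj P c x)) - (y - qinv P c (proj P c y)) with hr
  -- decomposition
  have hdecomp : x - y = r + g d := by
    simp only [hr, hd, qinv, proj, hg, hf, map_sub]
    abel
  have hr' : r = (x - y) - g d := by rw [eq_sub_iff_add_eq, ← hdecomp]
  have hfxy : f (x - y) = d := by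
    simp only [hd, proj, hf]
    rw [show x - y = (x - c) - (y - c) by abel, map_sub]
  have hfr : f r = 0 := by
    rw [hr', map_sub, hfxy]
    have : f (g d) = d := by simp only [hf, hg]; exact fg_eq hP d
    rw [this, sub_self]
  have horth : ⟪g d, r⟫_ℝ = 0 := by rw [inner_g, ← hf, hfr, inner_zero_right]
  have hgd : ‖g d‖ ^ 2 = ‖d‖ ^ 2 := by
    have : ⟪g d, g d⟫_ℝ = ⟪d, d⟫_ℝ := by
      rw [inner_g, ← hf, fg_eq hP]
    rw [← real_inner_self_eq_norm_sq, ← real_inner_self_eq_norm_sq]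
    exact this
  have hxy : ‖x - y‖ ^ 2 = ‖r‖ ^ 2 + ‖d‖ ^ 2 := by
    rw [hdecomp, ← hgd]
    rw [norm_add_sq_real, real_inner_comm, horth]
    ring
  -- feature norm
  have hfeat : ‖compFeat P c x - compFeat P c y‖ ^ 2
      = ‖d‖ ^ 2 + (pdist P c x - pdist P c y) ^ 2 := by
    rw [WithLp.prod_norm_sq_eq_of_L2]
    have h1 : (compFeat P c x - compFeat P c y).fst = d := rfl
    have h2 : (compFeat P c x - compFeat P c y).snd = pdist P c x - pdist P c y := rfl
    rw [h1, h2, Real.norm_eq_abs, sq_abs]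
  have hδ : (pdist P c x - pdist P c y) ^ 2 ≤ ‖r‖ ^ 2 := by
    have := abs_norm_sub_norm_le (x - qinv P c (proj P c x)) (y - qinv P c (proj P c y))
    rw [← hr] at this
    calc (pdist P c x - pdist P c y) ^ 2 = |pdist P c x - pdist P c y| ^ 2 := (sq_abs _).symm
      _ ≤ ‖r‖ ^ 2 := by
          apply pow_le_pow_left₀ (abs_nonneg _) _
          exact this
  have key : ∀ a b : ℝ, 0 ≤ a → 0 ≤ b → a ^ 2 ≤ b ^ 2 → a ≤ b := by
    intro a b ha hb h
    have := Real.sqrt_le_sqrt h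
    rwa [Real.sqrt_sq ha, Real.sqrt_sq hb] at this
  constructor
  · refine key _ _ (norm_nonneg _) (norm_nonneg _) ?_
    rw [hfeat]
    nlinarith [sq_nonneg (pdist P c x - pdist P c y)]
  · refine key _ _ (norm_nonneg _) (norm_nonneg _) ?_
    rw [hfeat, hxy]
    linarith
end
end

section
/- With notation as in the distance bounding setting: ‖x − y‖² − ‖Y(x) − Y(y)‖² = 2δ(x)δ(y)(1 − cos φ), where φ is the angle between the residual vectors x − q(p(x)) and y − q(p(y)) (assuming both residuals are nonzero). Equivalently, ‖x − y‖² − ‖Y(x) − Y(y)‖² = 2(δ(x)δ(y) − ⟨x − q(p(x)), y − q(p(y))⟩). -/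
/-! Since `Pᵀ * P = 1`, `z ↦ P z` is an isometry whose adjoint `Pᵀ` kills the residual
`r v = v - q (p v)`. Hence `x - y = P (p x - p y) + (r x - r y)` is an orthogonal splitting and
`‖x - y‖² = ‖p x - p y‖² + ‖r x - r y‖²`, while `‖Y x - Y y‖² = ‖p x - p y‖² + (‖r x‖ - ‖r y‖)²`.
The difference is `‖r x - r y‖² - (‖r x‖ - ‖r y‖)² = 2 (‖r x‖ ‖r y‖ - ⟪r x, r y⟫)`. -/

noncomputable section
open Matrix

theorem norm_sub_sq_sub_sq_norm_sub_norm {E : Type*} [NormedAddCommGroup E]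
    [InnerProductSpace ℝ E] (a b : E) :
    ‖a - b‖ ^ 2 - (‖a‖ - ‖b‖) ^ 2 = 2 * (‖a‖ * ‖b‖ - inner ℝ a b) := by
  rw [norm_sub_sq_real]
  ring

theorem real_inner_eq_zero_of_norm_mul_norm_eq_zero {E : Type*} [NormedAddCommGroup E]
    [InnerProductSpace ℝ E] {a b : E} (h : ‖a‖ * ‖b‖ = 0) : inner ℝ a b = (0 : ℝ) :=
  abs_nonpos_iff.mp (h ▸ abs_real_inner_le_norm a b)

section MatrixIsometry

variable {ι κ : Type*} [Fintype ι] [Fintype κ] [DecidableEq ι] [DecidableEq κ]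

theorem real_inner_toEuclideanLin_left (A : Matrix ι κ ℝ) (z : EuclideanSpace ℝ κ)
    (w : EuclideanSpace ℝ ι) :
    inner ℝ (Matrix.toEuclideanLin A z) w = (inner ℝ z (Matrix.toEuclideanLin Aᵀ w) : ℝ) := by
  rw [← Matrix.conjTranspose_eq_transpose_of_trivial,
    Matrix.toEuclideanLin_conjTranspose_eq_adjoint, LinearMap.adjoint_inner_right]

variable {A : Matrix ι κ ℝ}

theorem toEuclideanLin_transpose_toEuclideanLin (hA : Aᵀ * A = 1) (z : EuclideanSpace ℝ κ) :
    Matrix.toEuclideanLin Aᵀ (Matrix.toEuclideanLin A z) = z := by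
  simp [Matrix.toLpLin_apply, Matrix.mulVec_mulVec, hA]

theorem norm_toEuclideanLin_of_transpose_mul_self (hA : Aᵀ * A = 1) (z : EuclideanSpace ℝ κ) :
    ‖Matrix.toEuclideanLin A z‖ = ‖z‖ := by
  rw [norm_eq_sqrt_real_inner, norm_eq_sqrt_real_inner, real_inner_toEuclideanLin_left,
    toEuclideanLin_transpose_toEuclideanLin hA]

end MatrixIsometry

section ProjectionGeometry

variable {n m : ℕ} (P : Matrix (Fin n) (Fin m) ℝ) (c : EuclideanSpace ℝ (Fin n))

def projResidual (v : EuclideanSpace ℝ (Fin n)) : EuclideanSpace ℝ (Fin n) :=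
  v - qinv P c (proj P c v)

theorem pdist_eq_norm_projResidual (v : EuclideanSpace ℝ (Fin n)) :
    pdist P c v = ‖projResidual P c v‖ :=
  rfl

theorem sub_eq_toEuclideanLin_proj_sub_add_projResidual_sub (x y : EuclideanSpace ℝ (Fin n)) :
    x - y = Matrix.toEuclideanLin P (proj P c x - proj P c y) +
      (projResidual P c x - projResidual P c y) := by
  simp only [projResidual, qinv, map_sub]
  abel

theorem norm_compFeat_sub_sq (x y : EuclideanSpace ℝ (Fin n)) :
    ‖compFeat P c x - compFeat P c y‖ ^ 2 =
      ‖proj P c x - proj P c y‖ ^ 2 + (pdist P c x - pdist P c y) ^ 2 := by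
  rw [WithLp.prod_norm_sq_eq_of_L2, Real.norm_eq_abs, sq_abs]
  rfl

variable {P}

theorem toEuclideanLin_transpose_projResidual (hP : Pᵀ * P = 1) (v : EuclideanSpace ℝ (Fin n)) :
    Matrix.toEuclideanLin Pᵀ (projResidual P c v) = 0 := by
  rw [projResidual, qinv, map_sub, map_add, toEuclideanLin_transpose_toEuclideanLin hP, proj,
    map_sub]
  abel

theorem real_inner_toEuclideanLin_projResidual (hP : Pᵀ * P = 1) (z : EuclideanSpace ℝ (Fin m))
    (v : EuclideanSpace ℝ (Fin n)) :
    inner ℝ (Matrix.toEuclideanLin P z) (projResidual P c v) = (0 : ℝ) := by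
  rw [real_inner_toEuclideanLin_left, toEuclideanLin_transpose_projResidual c hP, inner_zero_right]

theorem norm_sub_sq_eq_norm_proj_sub_sq_add_norm_projResidual_sub_sq (hP : Pᵀ * P = 1)
    (x y : EuclideanSpace ℝ (Fin n)) :
    ‖x - y‖ ^ 2 =
      ‖proj P c x - proj P c y‖ ^ 2 + ‖projResidual P c x - projResidual P c y‖ ^ 2 := by
  have horth : inner ℝ (Matrix.toEuclideanLin P (proj P c x - proj P c y))
      (projResidual P c x - projResidual P c y) = (0 : ℝ) := by
    rw [inner_sub_right, real_inner_toEuclideanLin_projResidual c hP,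
      real_inner_toEuclideanLin_projResidual c hP, sub_zero]
  rw [sub_eq_toEuclideanLin_proj_sub_add_projResidual_sub P c, norm_add_sq_real, horth,
    norm_toEuclideanLin_of_transpose_mul_self hP]
  ring

end ProjectionGeometry

theorem compressed_distance_error_general {n m : ℕ} (P : Matrix (Fin n) (Fin m) ℝ)
    (hP : Pᵀ * P = 1) (c x y : EuclideanSpace ℝ (Fin n)) :
    ‖x - y‖ ^ 2 - ‖compFeat P c x - compFeat P c y‖ ^ 2 =
      2 * pdist P c x * pdist P c y *
        (1 - (inner ℝ (x - qinv P c (proj P c x)) (y - qinv P c (proj P c y)) : ℝ) /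
          (pdist P c x * pdist P c y)) ∧
    ‖x - y‖ ^ 2 - ‖compFeat P c x - compFeat P c y‖ ^ 2 =
      2 * (pdist P c x * pdist P c y -
        (inner ℝ (x - qinv P c (proj P c x)) (y - qinv P c (proj P c y)) : ℝ)) := by
  have key : ‖x - y‖ ^ 2 - ‖compFeat P c x - compFeat P c y‖ ^ 2 =
      2 * (pdist P c x * pdist P c y - inner ℝ (projResidual P c x) (projResidual P c y)) := by
    rw [norm_sub_sq_eq_norm_proj_sub_sq_add_norm_projResidual_sub_sq c hP, norm_compFeat_sub_sq,
      pdist_eq_norm_projResidual, pdist_eq_norm_projResidual, ← norm_sub_sq_sub_sq_norm_sub_norm]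
    ring
  refine ⟨?_, key⟩
  -- also valid when `δ x * δ y = 0`: then `/` returns `0`, but so does the inner product
  have hcancel : pdist P c x * pdist P c y *
      (inner ℝ (projResidual P c x) (projResidual P c y) / (pdist P c x * pdist P c y)) =
        inner ℝ (projResidual P c x) (projResidual P c y) :=
    mul_div_cancel_of_imp' real_inner_eq_zero_of_norm_mul_norm_eq_zero
  rw [key, ← hcancel]
  unfold projResidual
  ring

/-- ‖x − y‖² − ‖Y(x) − Y(y)‖² = 2δ(x)δ(y)(1 − cos φ), where
cos φ = ⟨x − q(p(x)), y − q(p(y))⟩/(δ(x)δ(y)); equivalently it equals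
2(δ(x)δ(y) − ⟨x − q(p(x)), y − q(p(y))⟩). -/
theorem compressed_distance_error {n m : ℕ} (P : Matrix (Fin n) (Fin m) ℝ)
    (hP : Pᵀ * P = 1) (c x y : EuclideanSpace ℝ (Fin n))
    (hx : x - qinv P c (proj P c x) ≠ 0) (hy : y - qinv P c (proj P c y) ≠ 0) :
    ‖x - y‖ ^ 2 - ‖compFeat P c x - compFeat P c y‖ ^ 2 =
      2 * pdist P c x * pdist P c y *
        (1 - (inner ℝ (x - qinv P c (proj P c x)) (y - qinv P c (proj P c y)) : ℝ) /
          (pdist P c x * pdist P c y)) ∧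
    ‖x - y‖ ^ 2 - ‖compFeat P c x - compFeat P c y‖ ^ 2 =
      2 * (pdist P c x * pdist P c y -
        (inner ℝ (x - qinv P c (proj P c x)) (y - qinv P c (proj P c y)) : ℝ)) :=
  compressed_distance_error_general P hP c x y
end
end

section
/- For the compressed-feature distance, equality ‖Y(x) − Y(y)‖ = ‖x − y‖ holds if and only if the residual vectors x − q(p(x)) and y − q(p(y)) are nonnegatively proportional (i.e., one is a nonnegative scalar multiple of the other). -/
noncomputable section
open Matrix

open RealInnerProductSpace in
private lemma toEuclideanLin_transpose_comp {n m : ℕ} (P : Matrix (Fin n) (Fin m) ℝ)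
    (hP : Pᵀ * P = 1) (z : EuclideanSpace ℝ (Fin m)) :
    Matrix.toEuclideanLin Pᵀ (Matrix.toEuclideanLin P z) = z := by
  simp [Matrix.toEuclideanLin_apply, Matrix.mulVec_mulVec, hP]

open RealInnerProductSpace in
private lemma toEuclideanLin_adj {n m : ℕ} (P : Matrix (Fin n) (Fin m) ℝ)
    (z : EuclideanSpace ℝ (Fin m)) (w : EuclideanSpace ℝ (Fin n)) :
    ⟪Matrix.toEuclideanLin P z, w⟫ = ⟪z, Matrix.toEuclideanLin Pᵀ w⟫ := by
  have h : Pᵀ = Pᴴ := by ext i j; simp [Matrix.conjTranspose_apply]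
  rw [h, Matrix.toEuclideanLin_conjTranspose_eq_adjoint, LinearMap.adjoint_inner_right]

set_option maxHeartbeats 1000000 in
open RealInnerProductSpace in
/-- ‖Y(x) − Y(y)‖ = ‖x − y‖ iff the residuals x − q(p(x)) and y − q(p(y)) are
nonnegatively proportional. -/
theorem compressed_distance_eq_iff {n m : ℕ} (P : Matrix (Fin n) (Fin m) ℝ)
    (hP : Pᵀ * P = 1) (c x y : EuclideanSpace ℝ (Fin n)) :
    ‖compFeat P c x - compFeat P c y‖ = ‖x - y‖ ↔
      ∃ α β : ℝ, 0 ≤ α ∧ 0 ≤ β ∧ ¬(α = 0 ∧ β = 0) ∧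
        α • (x - qinv P c (proj P c x)) = β • (y - qinv P c (proj P c y)) := by
  set A := Matrix.toEuclideanLin P with hA
  set B := Matrix.toEuclideanLin Pᵀ with hB
  set rx := x - qinv P c (proj P c x) with hrxdef
  set ry := y - qinv P c (proj P c y) with hrydef
  have hBA : ∀ z, B (A z) = z := toEuclideanLin_transpose_comp P hP
  have hrx : rx = (x - c) - A (B (x - c)) := by
    rw [hrxdef]; simp only [qinv, proj, ← hA, ← hB]; abel
  have hry : ry = (y - c) - A (B (y - c)) := by
    rw [hrydef]; simp only [qinv, proj, ← hA, ← hB]; abel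
  have hBrx : B rx = 0 := by rw [hrx, map_sub, hBA, sub_self]
  have hBry : B ry = 0 := by rw [hry, map_sub, hBA, sub_self]
  have hxy : x - y = A (B (x - y)) + (rx - ry) := by
    rw [hrx, hry]
    have : B (x - c) - B (y - c) = B (x - y) := by rw [← map_sub]; congr 1; abel
    rw [← this, map_sub]; abel
  have horth : ⟪A (B (x - y)), rx - ry⟫ = 0 := by
    have hz : B (rx - ry) = 0 := by rw [map_sub, hBrx, hBry, sub_self]
    rw [toEuclideanLin_adj, ← hB, hz, inner_zero_right]
  have hnormA : ∀ z, ‖A z‖ = ‖z‖ := by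
    intro z
    have hin : ⟪A z, A z⟫ = ⟪z, z⟫ := by rw [toEuclideanLin_adj, ← hB, hBA]
    rw [← sq_eq_sq₀ (norm_nonneg _) (norm_nonneg _), ← real_inner_self_eq_norm_sq,
      ← real_inner_self_eq_norm_sq, hin]
  have hRHSsq : ‖x - y‖ ^ 2 = ‖B (x - y)‖ ^ 2 + ‖rx - ry‖ ^ 2 := by
    conv_lhs => rw [hxy]
    rw [norm_add_sq_real, horth, hnormA (B (x - y))]; ring
  have hproj : proj P c x - proj P c y = B (x - y) := by
    simp only [proj, ← hB, ← map_sub]; congr 1; abel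
  have hLHSsq : ‖compFeat P c x - compFeat P c y‖ ^ 2 =
      ‖B (x - y)‖ ^ 2 + (pdist P c x - pdist P c y) ^ 2 := by
    rw [WithLp.prod_norm_sq_eq_of_L2, WithLp.sub_fst, WithLp.sub_snd]
    have h1 : (compFeat P c x).fst = proj P c x := rfl
    have h2 : (compFeat P c y).fst = proj P c y := rfl
    have h3 : (compFeat P c x).snd = pdist P c x := rfl
    have h4 : (compFeat P c y).snd = pdist P c y := rfl
    rw [h1, h2, h3, h4, hproj]
    rw [Real.norm_eq_abs, sq_abs]
  have hdx : pdist P c x = ‖rx‖ := rfl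
  have hdy : pdist P c y = ‖ry‖ := rfl
  have key : ‖compFeat P c x - compFeat P c y‖ = ‖x - y‖ ↔ ⟪rx, ry⟫ = ‖rx‖ * ‖ry‖ := by
    rw [← sq_eq_sq₀ (norm_nonneg _) (norm_nonneg _), hLHSsq, hRHSsq, hdx, hdy]
    rw [norm_sub_sq_real rx ry]
    constructor
    · intro h; nlinarith [h]
    · intro h; nlinarith [h]
  rw [key]
  constructor
  · intro h
    by_cases h0 : ‖rx‖ = 0 ∧ ‖ry‖ = 0
    · refine ⟨1, 1, zero_le_one, zero_le_one, by norm_num, ?_⟩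
      rw [norm_eq_zero.mp h0.1, norm_eq_zero.mp h0.2]
    · exact ⟨‖ry‖, ‖rx‖, norm_nonneg _, norm_nonneg _, by tauto,
        inner_eq_norm_mul_iff_real.mp h⟩
  · rintro ⟨α, β, hα, hβ, hne, heq⟩
    rcases hα.eq_or_lt with h0 | h0
    · have hβ0 : β ≠ 0 := fun hb => hne ⟨h0.symm, hb⟩
      have : ry = 0 := by
        have := heq; rw [← h0, zero_smul] at this
        exact (smul_eq_zero.mp this.symm).resolve_left hβ0
      simp [this]
    · have hrx' : rx = (β / α) • ry := by
        have : rx = α⁻¹ • (α • rx) := by rw [smul_smul, inv_mul_cancel₀ h0.ne', one_smul]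
        rw [this, heq, smul_smul, div_eq_inv_mul]
      rw [hrx', real_inner_smul_left, norm_smul, Real.norm_eq_abs,
        abs_of_nonneg (div_nonneg hβ hα), real_inner_self_eq_norm_mul_norm]
      ring
end
end

section
/- Let (x_t)_{t≥0} be a sequence in R^n with ‖x_{t+1} − x_t‖ ≤ √2 for all t, x_Q ∈ R^n, d(t) = ‖x_t − x_Q‖, and θ ≥ 0. Define the adaptive skip w(t) = ⌊(d(t) − θ)/√2⌋ + 1 if d(t) > θ, else w(t) = 1, and the visited index set V recursively by t_0 = 0, t_{i+1} = t_i + w(t_i). Then every index t with d(t) ≤ θ belongs to V; i.e., the skipping search visits all detection positions. -/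
noncomputable section

/-- Correctness of Time-series Active Search window skipping: with the adaptive
skip width w(t) = ⌊(d(t) − θ)/√2⌋ + 1 for d(t) > θ (the paper's floor being
the largest integer strictly less than its argument, so w(t) = ⌈(d(t) − θ)/√2⌉)
and w(t) = 1 otherwise, every position t with d(t) ≤ θ is visited. -/
theorem tas_visits_all_detections {n : ℕ} (x : ℕ → EuclideanSpace ℝ (Fin n))
    (hLip : ∀ t, ‖x (t + 1) - x t‖ ≤ Real.sqrt 2)
    (xQ : EuclideanSpace ℝ (Fin n)) (θ : ℝ) (hθ : 0 ≤ θ)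
    (d : ℕ → ℝ) (hd : ∀ t, d t = ‖x t - xQ‖)
    (w : ℕ → ℕ)
    (hw : ∀ s, w s = if d s > θ then ⌈(d s - θ) / Real.sqrt 2⌉₊ else 1)
    (v : ℕ → ℕ) (hv0 : v 0 = 0) (hvs : ∀ i, v (i + 1) = v i + w (v i)) :
    ∀ s : ℕ, d s ≤ θ → ∃ i : ℕ, v i = s := by
  have hs2 : (0:ℝ) < Real.sqrt 2 := Real.sqrt_pos.mpr (by norm_num)
  -- d is 1-Lipschitz with constant √2 per step
  have hstep : ∀ t, d t - Real.sqrt 2 ≤ d (t + 1) := by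
    intro t
    have h1 : d t - d (t+1) ≤ ‖x t - x (t+1)‖ := by
      rw [hd, hd]
      exact (abs_le.mp (abs_norm_sub_norm_le _ _)).2.trans (le_of_eq (by
        congr 1; abel))
    have h2 : ‖x t - x (t+1)‖ ≤ Real.sqrt 2 := by
      rw [← norm_neg]; simpa using hLip t
    linarith
  have hlow : ∀ s k, d s - k * Real.sqrt 2 ≤ d (s + k) := by
    intro s k
    induction k with
    | zero => simp
    | succ k ih =>
        have h1 : d (s + k) - Real.sqrt 2 ≤ d (s + (k+1)) := by
          have h' : s + (k+1) = (s+k)+1 := by omega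
          rw [h']; exact hstep _
        push_cast at ih ⊢
        nlinarith
  -- skip width positive
  have hwpos : ∀ s, 1 ≤ w s := by
    intro s
    rw [hw]
    split_ifs with h
    · have : (0:ℝ) < (d s - θ) / Real.sqrt 2 := div_pos (by linarith) hs2
      exact Nat.one_le_ceil_iff.mpr this
    · exact le_refl 1
  -- inside a skip, no detection
  have hgap : ∀ s k, 0 < k → k < w s → θ < d (s + k) := by
    intro s k hk hkw
    have hds : d s > θ := by
      by_contra h
      rw [hw] at hkw
      simp [h] at hkw
      omega
    rw [hw, if_pos hds] at hkw
    have hlt : (k:ℝ) < (d s - θ) / Real.sqrt 2 := by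
      have h1 : (k:ℝ) + 1 ≤ (⌈(d s - θ) / Real.sqrt 2⌉₊ : ℝ) := by
        exact_mod_cast hkw
      have h3 : (⌈(d s - θ) / Real.sqrt 2⌉₊ : ℝ) < (d s - θ) / Real.sqrt 2 + 1 := by
        apply Nat.ceil_lt_add_one
        exact le_of_lt (div_pos (by linarith) hs2)
      linarith
    have : (k:ℝ) * Real.sqrt 2 < d s - θ := by
      rw [lt_div_iff₀ hs2] at hlt; linarith
    have := hlow s k
    linarith
  -- main argument
  intro s hsθ
  -- find largest i with v i ≤ s
  have hmono : ∀ i, v i < v (i + 1) := by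
    intro i; rw [hvs]; have := hwpos (v i); omega
  have hge : ∀ i, i ≤ v i := by
    intro i
    induction i with
    | zero => omega
    | succ i ih => have := hmono i; omega
  have hex : ∃ i, s < v (i + 1) := ⟨s, by have := hge (s+1); omega⟩
  classical
  set i := Nat.find hex with hi_def
  have hi : s < v (i + 1) := Nat.find_spec hex
  have hmin : ∀ j, j < i → ¬ s < v (j + 1) := fun j hj => Nat.find_min hex hj
  have hvi : v i ≤ s := by
    rcases Nat.eq_zero_or_pos i with h0 | hpos
    · rw [h0, hv0]; omega
    · have := hmin (i - 1) (by omega)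
      rw [show i - 1 + 1 = i by omega] at this
      omega
  -- s = v i + k, k < w (v i)
  have hk : s - v i < w (v i) := by
    have := hvs i
    omega
  rcases Nat.eq_zero_or_pos (s - v i) with h0 | hpos
  · exact ⟨i, by omega⟩
  · exfalso
    have := hgap (v i) (s - v i) hpos hk
    rw [show v i + (s - v i) = s by omega] at this
    linarith
end
end
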